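/- arXiv:1204.1936 — 5 statements merged into one kernel-verified Lean document; each statement's English description precedes it below -/
import Mathlib

section
/- Let 𝒯 be a generalized k-forest on v vertices. Then every k-uniform hypergraph on n vertices containing no copy of 𝒯 has at most (v − k)·C(n, k−1) edges; that is, ex_k(n, 𝒯) ≤ (v − k)·C(n, k−1). -/
/-- A generalized `k`-forest, presented as a list of edges together with the list of
defining sets: a single `k`-edge is a `k`-forest; one may add a new edge `A ∪ B` where
`A` is contained in some existing edge and `B` is disjoint from the current vertex set,
with `|A| + |B| = k`. -/
inductive KForest {α : Type*} [DecidableEq α] (k : ℕ) :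
    List (Finset α) → List (Finset α) → Prop
  | single (E : Finset α) (hE : E.card = k) : KForest k [E] []
  | extend {l As : List (Finset α)} (h : KForest k l As) (A B E : Finset α)
      (hE : E ∈ l) (hA : A ⊆ E) (hB : ∀ F ∈ l, Disjoint B F)
      (hcard : A.card + B.card = k) : KForest k (l ++ [A ∪ B]) (As ++ [A])

/-- The vertex set of a family of edges. -/
def vset {α : Type*} [DecidableEq α] (l : List (Finset α)) : Finset α :=
  l.foldr (· ∪ ·) ∅

/-- A family of edges is connected (as a hypergraph) if any two of its edges are linked by
a chain of pairwise intersecting edges of the family. -/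
def HyperConnected {α : Type*} [DecidableEq α] (l : List (Finset α)) : Prop :=
  ∀ E ∈ l, ∀ F ∈ l,
    Relation.ReflTransGen (fun X Y => X ∈ l ∧ Y ∈ l ∧ (X ∩ Y).Nonempty) E F

/-!
Repeatedly deleting all edges through a `(k-1)`-set of codegree at most `v - k` removes at most
`v - k` edges per shadow set, so a family with more than `(v - k)·C(n, k-1)` edges keeps a
nonempty subfamily in which every `(k-1)`-subset of an edge lies in more than `v - k` edges.
Such a family contains every generalized `k`-forest on `v` vertices, embedded greedily: when
the edge `A ∪ B` is attached, the image of `A` is completed to an edge one new vertex at a time,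
and at each step at most `v - k` of the candidate vertices are already in use.
-/

open Finset
open scoped FinsetFamily

namespace Finset

variable {α β : Type*}

lemma exists_bijOn_of_card_eq [Nonempty β] {s : Finset α} {t : Finset β} (h : #s = #t) :
    ∃ f : α → β, Set.BijOn f s t :=
  s.finite_toSet.exists_bijOn_of_encard_eq (by simp [h])

variable [DecidableEq β]

lemma exists_injOn_union_extension [DecidableEq α] [Nonempty β] {f : α → β} {s t : Finset α}
    {T : Finset β} (hf : Set.InjOn f s) (hst : Disjoint s t) (hT : #t = #T)
    (hTs : Disjoint T (s.image f)) :
    ∃ g : α → β, Set.EqOn g f s ∧ Set.InjOn g ↑(s ∪ t) ∧ t.image g = T := by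
  obtain ⟨φ, hφ⟩ := exists_bijOn_of_card_eq hT
  have hgs : Set.EqOn (t.piecewise φ f) f s :=
    fun x hx => piecewise_eq_of_notMem _ _ _ (disjoint_left.1 hst hx)
  have hgt : Set.EqOn (t.piecewise φ f) φ t := fun x hx => piecewise_eq_of_mem _ _ _ hx
  refine ⟨t.piecewise φ f, hgs, ?_, ?_⟩
  · rw [coe_union, Set.injOn_union (disjoint_coe.2 hst)]
    refine ⟨hf.congr hgs.symm, hφ.injOn.congr hgt.symm, fun x hx y hy hxy => ?_⟩
    rw [hgs hx, hgt hy] at hxy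
    exact disjoint_left.1 hTs (hφ.mapsTo hy) (hxy ▸ mem_image_of_mem f hx)
  · rw [image_congr hgt, ← coe_inj, coe_image, hφ.image_eq]

lemma card_shadow_le_choose {𝒜 : Finset (Finset β)} {V : Finset β} {k : ℕ}
    (h𝒜 : ∀ F ∈ 𝒜, F ⊆ V ∧ #F = k) : #(∂ 𝒜) ≤ (#V).choose (k - 1) := by
  rw [← card_powersetCard]
  refine card_le_card fun D hD => ?_
  obtain ⟨F, hF, hDF, hcard⟩ := mem_shadow_iff_exists_mem_card_add_one.1 hD
  exact mem_powersetCard.2 ⟨hDF.trans (h𝒜 F hF).1, by rw [(h𝒜 F hF).2] at hcard; omega⟩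

def codegree (𝒜 : Finset (Finset β)) (D : Finset β) : ℕ := #{G ∈ 𝒜 | D ⊆ G}

lemma exists_subfamily_lt_codegree (d : ℕ) (𝒜 : Finset (Finset β)) (h : d * #(∂ 𝒜) < #𝒜) :
    ∃ ℬ ⊆ 𝒜, ℬ.Nonempty ∧ ∀ D ∈ ∂ ℬ, d < codegree ℬ D := by
  induction 𝒜 using Finset.strongInduction with
  | H 𝒜 ih =>
  by_cases hgood : ∀ D ∈ ∂ 𝒜, d < codegree 𝒜 D
  · exact ⟨𝒜, Subset.rfl, card_pos.1 (by omega), hgood⟩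
  push Not at hgood
  obtain ⟨D, hD, hdeg⟩ := hgood
  obtain ⟨F, hF, hDF⟩ := exists_subset_of_mem_shadow hD
  have hsub : {G ∈ 𝒜 | ¬ D ⊆ G} ⊂ 𝒜 := filter_ssubset.2 ⟨F, hF, not_not.2 hDF⟩
  have hshadow : ∂ {G ∈ 𝒜 | ¬ D ⊆ G} ⊆ (∂ 𝒜).erase D := by
    intro D' hD'
    refine mem_erase.2 ⟨?_, shadow_mono (filter_subset _ _) hD'⟩
    rintro rfl
    obtain ⟨G, hG, hDG⟩ := exists_subset_of_mem_shadow hD'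
    exact (mem_filter.1 hG).2 hDG
  have hsplit : #{G ∈ 𝒜 | ¬ D ⊆ G} + codegree 𝒜 D = #𝒜 :=
    add_comm _ (codegree 𝒜 D) ▸ card_filter_add_card_filter_not _
  have hshadow_card : #(∂ {G ∈ 𝒜 | ¬ D ⊆ G}) + 1 ≤ #(∂ 𝒜) := by
    have := card_le_card hshadow
    rw [card_erase_of_mem hD] at this
    have := card_pos.2 ⟨D, hD⟩
    omega
  have hmul := Nat.mul_le_mul_left d hshadow_card
  obtain ⟨ℬ, hℬ, hne, hℬdeg⟩ := ih _ hsub (by rw [mul_add_one] at hmul; omega)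
  exact ⟨ℬ, hℬ.trans (filter_subset _ _), hne, hℬdeg⟩

variable {k d : ℕ} {ℋ : Finset (Finset β)}

lemma exists_insert_subset_mem (hℋ : (ℋ : Set (Finset β)).Sized k)
    (hdeg : ∀ D ∈ ∂ ℋ, d < codegree ℋ D) {A S F : Finset β} (hF : F ∈ ℋ) (hAF : A ⊆ F)
    (hA : #A < k) (hS : #(S \ A) ≤ d) :
    ∃ x ∉ A, x ∉ S ∧ ∃ G ∈ ℋ, insert x A ⊆ G := by
  obtain ⟨D, hAD, hDF, hD⟩ :=
    exists_subsuperset_card_eq hAF (n := k - 1) (by omega) (by rw [hℋ hF]; omega)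
  have hDsh : D ∈ ∂ ℋ :=
    mem_shadow_iff_exists_mem_card_add_one.2 ⟨F, hF, hDF, by rw [hℋ hF, hD]; omega⟩
  by_contra! hcon
  -- otherwise every edge through `D` is `insert x D` with `x ∈ S \ A`, so `D` has codegree `≤ d`
  have hcover : {G ∈ ℋ | D ⊆ G} ⊆ (S \ A).image (insert · D) := by
    intro G hG
    rw [mem_filter] at hG
    obtain ⟨x, hxD, rfl⟩ := exists_eq_insert_iff.2 ⟨hG.2, by rw [hℋ hG.1, hD]; omega⟩
    have hxA : x ∉ A := fun h => hxD (hAD h)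
    have hxS : x ∈ S := by
      by_contra hxS
      exact hcon x hxA hxS _ hG.1 (insert_subset_insert x hAD)
    exact mem_image_of_mem _ (mem_sdiff.2 ⟨hxS, hxA⟩)
  exact (hdeg D hDsh).not_ge (((card_le_card hcover).trans card_image_le).trans hS)

lemma exists_disjoint_union_mem (hℋ : (ℋ : Set (Finset β)).Sized k)
    (hdeg : ∀ D ∈ ∂ ℋ, d < codegree ℋ D) :
    ∀ (b : ℕ) {A S : Finset β}, (∃ F ∈ ℋ, A ⊆ F) → #A + b = k → #(S \ A) ≤ d →
      ∃ T, #T = b ∧ Disjoint T S ∧ A ∪ T ∈ ℋ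
  | 0, A, S, ⟨F, hF, hAF⟩, hA, _ => by
    refine ⟨∅, card_empty, disjoint_empty_left _, ?_⟩
    rwa [union_empty, eq_of_subset_of_card_le hAF (by rw [hℋ hF]; omega)]
  | b + 1, A, S, ⟨F, hF, hAF⟩, hA, hS => by
    obtain ⟨x, hxA, hxS, G, hG, hxG⟩ := exists_insert_subset_mem hℋ hdeg hF hAF (by omega) hS
    have hS' : #(insert x S \ insert x A) ≤ d := by
      refine (card_le_card fun y hy => ?_).trans hS
      simp only [mem_sdiff, mem_insert] at hy ⊢
      tauto
    obtain ⟨T, hT, hTS, hAT⟩ := exists_disjoint_union_mem hℋ hdeg b ⟨G, hG, hxG⟩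
      (by rw [card_insert_of_notMem hxA]; omega) hS'
    have hxT : x ∉ T := fun hx => disjoint_left.1 hTS hx (mem_insert_self x S)
    refine ⟨insert x T, by rw [card_insert_of_notMem hxT, hT], ?_, ?_⟩
    · exact disjoint_insert_left.2 ⟨hxS, hTS.mono_right (subset_insert x S)⟩
    · rwa [union_insert, ← insert_union]

end Finset

section VertexSet

variable {α : Type*} [DecidableEq α] {l m : List (Finset α)} {E B : Finset α}

lemma mem_vset {x : α} : x ∈ vset l ↔ ∃ E ∈ l, x ∈ E := by
  induction l with
  | nil => simp [vset]
  | cons E l ih => simp [vset, ← ih]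

lemma subset_vset_of_mem (hE : E ∈ l) : E ⊆ vset l := fun _ hx => mem_vset.2 ⟨E, hE, hx⟩

lemma disjoint_vset (hB : ∀ F ∈ l, Disjoint B F) : Disjoint B (vset l) :=
  disjoint_left.2 fun _ hx hxl =>
    let ⟨F, hF, hxF⟩ := mem_vset.1 hxl
    disjoint_left.1 (hB F hF) hx hxF

@[simp]
lemma vset_singleton : vset [E] = E := by
  ext; simp [mem_vset]

lemma vset_append : vset (l ++ m) = vset l ∪ vset m := by
  ext; simp [mem_vset, or_and_right, exists_or]

end VertexSet

namespace KForest

variable {α β : Type*} [DecidableEq α] {k : ℕ} {l As : List (Finset α)}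

lemma vset_extend {A B E : Finset α} (hE : E ∈ l) (hA : A ⊆ E) :
    vset (l ++ [A ∪ B]) = vset l ∪ B := by
  rw [vset_append, vset_singleton, ← union_assoc,
    union_eq_left.2 (hA.trans (subset_vset_of_mem hE))]

lemma le_card_vset (h : KForest k l As) : k ≤ #(vset l) := by
  induction h with
  | single E hE => rw [vset_singleton, hE]
  | extend _ A B E hE hA _ _ ih =>
    exact ih.trans (card_le_card (vset_extend (B := B) hE hA ▸ subset_union_left))

theorem exists_embedding [DecidableEq β] [Nonempty β] {d : ℕ} {ℋ : Finset (Finset β)}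
    (hne : ℋ.Nonempty) (hℋ : (ℋ : Set (Finset β)).Sized k)
    (hdeg : ∀ D ∈ ∂ ℋ, d < codegree ℋ D) (h : KForest k l As) (hv : #(vset l) ≤ d + k) :
    ∃ f : α → β, Set.InjOn f ↑(vset l) ∧ ∀ E ∈ l, E.image f ∈ ℋ := by
  induction h with
  | single E hE =>
    obtain ⟨F, hF⟩ := hne
    obtain ⟨f, hf⟩ := exists_bijOn_of_card_eq (hE.trans (hℋ hF).symm)
    refine ⟨f, by simpa using hf.injOn, fun E' hE' => ?_⟩
    have himage : E.image f = F := by rw [← coe_inj, coe_image, hf.image_eq]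
    rwa [List.mem_singleton.1 hE', himage]
  | @extend l As _ A B E hE hA hB hAB ih =>
    have hdisj : Disjoint (vset l) B := (disjoint_vset hB).symm
    rw [vset_extend hE hA] at hv ⊢
    rw [card_union_of_disjoint hdisj] at hv
    obtain ⟨f, hf, hfl⟩ := ih (by omega)
    have hAv : A ⊆ vset l := hA.trans (subset_vset_of_mem hE)
    have hfA : #(A.image f) = #A := card_image_of_injOn (hf.mono (coe_subset.2 hAv))
    have hused : #((vset l).image f \ A.image f) ≤ d := by
      rw [card_sdiff_of_subset (image_subset_image hAv), card_image_of_injOn hf, hfA]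
      omega
    obtain ⟨T, hT, hTS, hAT⟩ := exists_disjoint_union_mem hℋ hdeg #B
      ⟨_, hfl E hE, image_subset_image hA⟩ (by omega) hused
    obtain ⟨g, hgf, hg, hgB⟩ := exists_injOn_union_extension hf hdisj hT.symm hTS
    have himage {E' : Finset α} (hE' : E' ⊆ vset l) : E'.image g = E'.image f :=
      image_congr (hgf.mono (coe_subset.2 hE'))
    refine ⟨g, hg, fun E' hE' => ?_⟩
    rcases List.mem_append.1 hE' with hE' | hE'
    · rw [himage (subset_vset_of_mem hE')]
      exact hfl E' hE'
    · rw [List.mem_singleton.1 hE', image_union, himage hAv, hgB]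
      exact hAT

end KForest

/-- If `𝒯` is a generalized `k`-forest on `v` vertices, then every `k`-uniform hypergraph
on `n` vertices containing no copy of `𝒯` has at most `(v-k)·C(n,k-1)` edges. -/
theorem stmt_7 {α : Type*} [DecidableEq α] (k n v : ℕ)
    (l As : List (Finset α)) (h : KForest k l As) (hv : (vset l).card = v)
    (V : Finset ℕ) (hV : V.card = n)
    (H : Finset (Finset ℕ)) (hH : ∀ F ∈ H, F ⊆ V ∧ F.card = k)
    (hfree : ¬ ∃ f : α → ℕ, Set.InjOn f ↑(vset l) ∧ ∀ E ∈ l, E.image f ∈ H) :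
    H.card ≤ (v - k) * Nat.choose n (k - 1) := by
  by_contra! hbig
  have hshadow : #(∂ H) ≤ n.choose (k - 1) := hV ▸ card_shadow_le_choose hH
  obtain ⟨H', hH', hne, hdeg⟩ := exists_subfamily_lt_codegree (v - k) H
    (hbig.trans_le' (Nat.mul_le_mul_left _ hshadow))
  obtain ⟨f, hf, hfl⟩ := h.exists_embedding hne (fun F hF => (hH F (hH' hF)).2) hdeg
    (by rw [hv, Nat.sub_add_cancel (hv ▸ h.le_card_vset)])
  exact hfree ⟨f, hf, fun E hE => hH' (hfl E hE)⟩
end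

section
/- For any tree T and any k ≥ 3, σ(T) = τ₁(T^{(k)}), where σ(T) = min{|X| + e(T∖X) : X an independent set of T} and τ₁ is the minimum size of a set meeting every edge of T^{(k)} in exactly one vertex. -/
/-- The `k`-expansion `T^(k)` of a graph `T`: each edge `e = xy` of `T` is replaced by the
`k`-set consisting of `x`, `y` and `k - 2` new vertices private to `e` (so new vertices of
distinct edges are distinct, and disjoint from `V(T)`). -/
def expansion (k : ℕ) {V : Type*} [Fintype V] [DecidableEq V] (T : SimpleGraph V)
    [DecidableRel T.Adj] : Finset (Finset (V ⊕ Sym2 V × Fin (k - 2))) :=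
  T.edgeFinset.image (fun e =>
    ((Finset.univ.filter (fun v => v ∈ e)).image Sum.inl) ∪
      (Finset.univ.image (fun i : Fin (k - 2) => Sum.inr (e, i))))

/-- `σ(T) = min { |X| + e(T ∖ X) : X independent in T }`. -/
noncomputable def graphSigma {V : Type*} (T : SimpleGraph V) : ℕ :=
  sInf {m | ∃ X : Set V, (∀ x ∈ X, ∀ y ∈ X, ¬ T.Adj x y) ∧ X.Finite ∧
    m = X.ncard + {e ∈ T.edgeSet | ∀ x ∈ X, x ∉ e}.ncard}

/-- `τ(T)`: the minimum size of a set of vertices meeting every edge of `T`. -/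
noncomputable def graphTau {V : Type*} (T : SimpleGraph V) : ℕ :=
  sInf {m | ∃ S : Set V, (∀ e ∈ T.edgeSet, ∃ x ∈ S, x ∈ e) ∧ S.Finite ∧ m = S.ncard}

/-- `H` contains a copy of the hypergraph `Ts` (a subhypergraph isomorphic to `Ts`). -/
def ContainsCopy {α β : Type*} [DecidableEq α] [DecidableEq β]
    (H : Finset (Finset β)) (Ts : Finset (Finset α)) : Prop :=
  ∃ f : α → β, Set.InjOn f ↑(Ts.sup id) ∧ ∀ E ∈ Ts, E.image f ∈ H

section Aux
variable {V : Type*} [Fintype V] [DecidableEq V] (T : SimpleGraph V) [DecidableRel T.Adj]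

/-- The edge-set of the expansion corresponding to edge `e`. -/
def Eset (k : ℕ) (e : Sym2 V) : Finset (V ⊕ Sym2 V × Fin (k - 2)) :=
  ((Finset.univ.filter (fun v => v ∈ e)).image Sum.inl) ∪
    (Finset.univ.image (fun i : Fin (k - 2) => Sum.inr (e, i)))

variable {T}

lemma mem_Eset {k : ℕ} {e : Sym2 V} {w : V ⊕ Sym2 V × Fin (k - 2)} :
    w ∈ Eset k e ↔ (∃ v ∈ e, w = Sum.inl v) ∨ ∃ i, w = Sum.inr (e, i) := by
  simp [Eset, eq_comm]

lemma expansion_eq (k : ℕ) : expansion k T = T.edgeFinset.image (Eset k) := rfl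

end Aux

section Aux2
variable {V : Type*} [Fintype V] [DecidableEq V] {T : SimpleGraph V} [DecidableRel T.Adj]

lemma unique_cover {Xf : Finset V} (hind : ∀ x ∈ Xf, ∀ y ∈ Xf, ¬ T.Adj x y)
    {e : Sym2 V} (he : e ∈ T.edgeSet) {x x' : V} (hx : x ∈ Xf) (hx' : x' ∈ Xf)
    (hxe : x ∈ e) (hx'e : x' ∈ e) : x = x' := by
  induction e using Sym2.ind with
  | _ a b =>
    rw [SimpleGraph.mem_edgeSet] at he
    rw [Sym2.mem_iff] at hxe hx'e
    rcases hxe with rfl | rfl <;> rcases hx'e with rfl | rfl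
    · rfl
    · exact absurd he (hind _ hx _ hx')
    · exact absurd he (hind _ hx' _ hx)
    · rfl

lemma construct {k : ℕ} (hk : 3 ≤ k) (Xf : Finset V)
    (hind : ∀ x ∈ Xf, ∀ y ∈ Xf, ¬ T.Adj x y) :
    ∃ Y : Finset (V ⊕ Sym2 V × Fin (k - 2)),
      (∀ E ∈ expansion k T, (E ∩ Y).card = 1) ∧
      Y.card ≤ Xf.card + (T.edgeFinset.filter (fun e => ∀ x ∈ Xf, x ∉ e)).card := by
  classical
  have hk2 : 0 < k - 2 := by omega
  set i0 : Fin (k - 2) := ⟨0, hk2⟩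
  set Uf := T.edgeFinset.filter (fun e => ∀ x ∈ Xf, x ∉ e) with hUf
  refine ⟨Xf.image Sum.inl ∪ Uf.image (fun e => Sum.inr (e, i0)), ?_, ?_⟩
  · intro E hE
    rw [expansion_eq, Finset.mem_image] at hE
    obtain ⟨e, he, rfl⟩ := hE
    have he' : e ∈ T.edgeSet := by rwa [SimpleGraph.mem_edgeFinset] at he
    by_cases hcov : ∃ x ∈ Xf, x ∈ e
    · obtain ⟨x, hxX, hxe⟩ := hcov
      have : Eset k e ∩ (Xf.image Sum.inl ∪ Uf.image (fun e => Sum.inr (e, i0)))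
          = {Sum.inl x} := by
        apply Finset.eq_singleton_iff_unique_mem.2
        constructor
        · refine Finset.mem_inter.2 ⟨mem_Eset.2 (Or.inl ⟨x, hxe, rfl⟩), ?_⟩
          exact Finset.mem_union_left _ (Finset.mem_image_of_mem _ hxX)
        · rintro w hw
          rw [Finset.mem_inter] at hw
          obtain ⟨hwE, hwY⟩ := hw
          rcases mem_Eset.1 hwE with ⟨v, hve, rfl⟩ | ⟨i, rfl⟩
          · have hvX : v ∈ Xf := by
              rcases Finset.mem_union.1 hwY with h | h
              · obtain ⟨u, hu, huv⟩ := Finset.mem_image.1 h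
                rw [Sum.inl.injEq] at huv
                exact huv ▸ hu
              · obtain ⟨u, _, huv⟩ := Finset.mem_image.1 h
                exact absurd huv (by simp)
            rw [unique_cover hind he' hvX hxX hve hxe]
          · exfalso
            rcases Finset.mem_union.1 hwY with h | h
            · obtain ⟨u, _, huv⟩ := Finset.mem_image.1 h
              exact absurd huv (by simp)
            · obtain ⟨e2, heU, hee⟩ := Finset.mem_image.1 h
              rw [Sum.inr.injEq, Prod.mk.injEq] at hee
              obtain ⟨rfl, _⟩ := hee
              rw [hUf, Finset.mem_filter] at heU
              exact heU.2 x hxX hxe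
      rw [this, Finset.card_singleton]
    · push_neg at hcov
      have heU : e ∈ Uf := by rw [hUf, Finset.mem_filter]; exact ⟨he, hcov⟩
      have : Eset k e ∩ (Xf.image Sum.inl ∪ Uf.image (fun e => Sum.inr (e, i0)))
          = {Sum.inr (e, i0)} := by
        apply Finset.eq_singleton_iff_unique_mem.2
        constructor
        · refine Finset.mem_inter.2 ⟨mem_Eset.2 (Or.inr ⟨i0, rfl⟩), ?_⟩
          exact Finset.mem_union_right _ (Finset.mem_image_of_mem _ heU)
        · rintro w hw
          rw [Finset.mem_inter] at hw
          obtain ⟨hwE, hwY⟩ := hw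
          rcases mem_Eset.1 hwE with ⟨v, hve, rfl⟩ | ⟨i, rfl⟩
          · exfalso
            rcases Finset.mem_union.1 hwY with h | h
            · obtain ⟨u, hu, huv⟩ := Finset.mem_image.1 h
              rw [Sum.inl.injEq] at huv
              exact hcov v (huv ▸ hu) hve
            · obtain ⟨u, _, huv⟩ := Finset.mem_image.1 h
              exact absurd huv (by simp)
          · rcases Finset.mem_union.1 hwY with h | h
            · obtain ⟨u, _, huv⟩ := Finset.mem_image.1 h
              exact absurd huv (by simp)
            · obtain ⟨e', _, hee⟩ := Finset.mem_image.1 h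
              rw [Sum.inr.injEq, Prod.mk.injEq] at hee
              rw [hee.2]
      rw [this, Finset.card_singleton]
  · refine le_trans (Finset.card_union_le _ _) ?_
    exact add_le_add Finset.card_image_le Finset.card_image_le

lemma extract {k : ℕ} {Y : Finset (V ⊕ Sym2 V × Fin (k - 2))}
    (hY : ∀ E ∈ expansion k T, (E ∩ Y).card = 1) :
    ∃ Xf : Finset V, (∀ x ∈ Xf, ∀ y ∈ Xf, ¬ T.Adj x y) ∧
      Xf.card + (T.edgeFinset.filter (fun e => ∀ x ∈ Xf, x ∉ e)).card ≤ Y.card := by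
  classical
  set Xf := Finset.univ.filter (fun v => Sum.inl v ∈ Y) with hXf
  have hXmem : ∀ v, v ∈ Xf ↔ Sum.inl v ∈ Y := by
    intro v; rw [hXf, Finset.mem_filter]; simp
  have hind : ∀ x ∈ Xf, ∀ y ∈ Xf, ¬ T.Adj x y := by
    intro x hx y hy hadj
    have hE : Eset k s(x, y) ∈ expansion k T := by
      rw [expansion_eq]
      exact Finset.mem_image_of_mem _ (by rwa [SimpleGraph.mem_edgeFinset,
        SimpleGraph.mem_edgeSet])
    have h1 := hY _ hE
    have hsub : ({Sum.inl x, Sum.inl y} : Finset (V ⊕ Sym2 V × Fin (k - 2)))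
        ⊆ Eset k s(x, y) ∩ Y := by
      intro w hw
      rcases Finset.mem_insert.1 hw with rfl | hw
      · exact Finset.mem_inter.2 ⟨mem_Eset.2 (Or.inl ⟨x, by simp, rfl⟩), (hXmem x).1 hx⟩
      · rw [Finset.mem_singleton] at hw
        subst hw
        exact Finset.mem_inter.2 ⟨mem_Eset.2 (Or.inl ⟨y, by simp, rfl⟩), (hXmem y).1 hy⟩
    have h2 : 2 ≤ (Eset k s(x, y) ∩ Y).card := by
      calc 2 = ({Sum.inl x, Sum.inl y} : Finset (V ⊕ Sym2 V × Fin (k - 2))).card := by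
              rw [Finset.card_insert_of_notMem (by simp [hadj.ne]), Finset.card_singleton]
        _ ≤ _ := Finset.card_le_card hsub
    omega
  refine ⟨Xf, hind, ?_⟩
  set Uf := T.edgeFinset.filter (fun e => ∀ x ∈ Xf, x ∉ e) with hUf
  set Yl := Y.filter (fun w => w.isLeft) with hYl
  set Yr := Y.filter (fun w => ¬ w.isLeft) with hYr
  have hsplit : Yl.card + Yr.card = Y.card :=
    Finset.card_filter_add_card_filter_not _
  have h1 : Xf.card ≤ Yl.card := by
    have : Xf.image Sum.inl ⊆ Yl := by
      intro w hw
      obtain ⟨v, hv, rfl⟩ := Finset.mem_image.1 hw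
      rw [hYl, Finset.mem_filter]
      exact ⟨(hXmem v).1 hv, rfl⟩
    calc Xf.card = (Xf.image Sum.inl).card :=
          (Finset.card_image_of_injective _ Sum.inl_injective).symm
      _ ≤ Yl.card := Finset.card_le_card this
  have h2 : Uf.card ≤ Yr.card := by
    have hsub : Uf ⊆ Yr.image (Sum.elim (fun v => s(v, v)) Prod.fst) := by
      intro e heU
      rw [hUf, Finset.mem_filter] at heU
      obtain ⟨he, hunc⟩ := heU
      have hE : Eset k e ∈ expansion k T := by
        rw [expansion_eq]; exact Finset.mem_image_of_mem _ he
      have h1 := hY _ hE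
      have hne : (Eset k e ∩ Y).Nonempty := by
        rw [← Finset.card_pos, h1]; norm_num
      obtain ⟨w, hw⟩ := hne
      rw [Finset.mem_inter] at hw
      obtain ⟨hwE, hwY⟩ := hw
      rcases mem_Eset.1 hwE with ⟨v, hve, rfl⟩ | ⟨i, rfl⟩
      · exact absurd hve (hunc v ((hXmem v).2 hwY))
      · refine Finset.mem_image.2 ⟨Sum.inr (e, i), ?_, rfl⟩
        rw [hYr, Finset.mem_filter]
        exact ⟨hwY, by simp⟩
    calc Uf.card ≤ _ := Finset.card_le_card hsub
      _ ≤ Yr.card := Finset.card_image_le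
  omega

end Aux2

/-- For any forest `T` with at least one edge and `k ≥ 3`, `σ(T) = τ₁(T^(k))`, where
`τ₁` is the minimum size of a set meeting every edge of `T^(k)` in exactly one vertex. -/
theorem stmt_9 {V : Type*} [Fintype V] [DecidableEq V] (T : SimpleGraph V)
    [DecidableRel T.Adj] (hT : T.IsAcyclic) (hne : T.edgeSet.Nonempty)
    (k : ℕ) (hk : 3 ≤ k) :
    graphSigma T = sInf {m | ∃ Y : Finset (V ⊕ Sym2 V × Fin (k - 2)),
      (∀ E ∈ expansion k T, (E ∩ Y).card = 1) ∧ m = Y.card} := by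
  classical
  have hset : ∀ Xf : Finset V,
      {e ∈ T.edgeSet | ∀ x ∈ (↑Xf : Set V), x ∉ e}.ncard
        = (T.edgeFinset.filter (fun e => ∀ x ∈ Xf, x ∉ e)).card := by
    intro Xf
    have : {e ∈ T.edgeSet | ∀ x ∈ (↑Xf : Set V), x ∉ e}
        = ↑(T.edgeFinset.filter (fun e => ∀ x ∈ Xf, x ∉ e)) := by
      ext e
      simp [Set.mem_setOf_eq, SimpleGraph.mem_edgeFinset]
    rw [this, Set.ncard_coe_finset]
  apply le_antisymm
  · apply le_csInf
    · obtain ⟨Y, hY, _⟩ := construct (T := T) hk ∅ (by simp)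
      exact ⟨Y.card, Y, hY, rfl⟩
    · rintro m ⟨Y, hY, rfl⟩
      obtain ⟨Xf, hind, hcard⟩ := extract hY
      refine le_trans (Nat.sInf_le ?_) hcard
      refine ⟨↑Xf, by simpa using hind, Xf.finite_toSet, ?_⟩
      rw [Set.ncard_coe_finset, hset]
  · apply le_csInf
    · refine ⟨_, ∅, by simp, Set.finite_empty, rfl⟩
    · rintro m ⟨X, hind, hfin, rfl⟩
      have hc : (↑hfin.toFinset : Set V) = X := hfin.coe_toFinset
      have hindf : ∀ x ∈ hfin.toFinset, ∀ y ∈ hfin.toFinset, ¬ T.Adj x y := by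
        intro x hx y hy
        exact hind x (by simpa using hx) y (by simpa using hy)
      obtain ⟨Y, hY, hcard⟩ := construct hk hfin.toFinset hindf
      refine le_trans (Nat.sInf_le ⟨Y, hY, rfl⟩) (le_trans hcard ?_)
      have h2 := hset hfin.toFinset
      rw [hc] at h2
      have h1 : X.ncard = hfin.toFinset.card := by
        conv_lhs => rw [← hc]
        exact Set.ncard_coe_finset _
      rw [h1, h2]
end

section
/- Let T be the tree consisting of a path a₁b₁b₂a₂ together with pendant edges: d pendant leaves attached to each of a₁ and a₂, and c pendant leaves attached to each of b₁ and b₂, where d > c ≥ 1. Then τ(T) = 4 and σ(T) = 2c + 3. -/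
set_option maxHeartbeats 1000000

lemma tok_card_le {α β ι : Type*} [Finite ι] {X : Set α} {U : Set β}
    (x : ι → α) (e : ι → β) (hx : Function.Injective x) (he : Function.Injective e)
    (hXf : X.Finite) (hUf : U.Finite)
    (h : ∀ i, x i ∉ X → e i ∈ U) : Nat.card ι ≤ X.ncard + U.ncard := by
  classical
  let t : ι → α ⊕ β := fun i => if x i ∈ X then Sum.inl (x i) else Sum.inr (e i)
  have hti : Function.Injective t := by
    intro i j hij
    by_cases h1 : x i ∈ X <;> by_cases h2 : x j ∈ X <;> simp only [t, h1, h2, if_true,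
      if_false, Sum.inl.injEq, Sum.inr.injEq, reduceCtorEq] at hij
    · exact hx hij
    · exact he hij
  have hsub : Set.range t ⊆ (Sum.inl '' X ∪ Sum.inr '' U) := by
    rintro w ⟨i, rfl⟩
    by_cases h1 : x i ∈ X
    · exact Or.inl ⟨x i, h1, by simp [t, h1]⟩
    · exact Or.inr ⟨e i, h i h1, by simp [t, h1]⟩
  have h1 : Nat.card ι = (Set.range t).ncard := by
    rw [← Nat.card_coe_set_eq, Nat.card_range_of_injective hti]
  have h2 : (Set.range t).ncard ≤ (Sum.inl '' X ∪ Sum.inr '' U : Set (α ⊕ β)).ncard :=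
    Set.ncard_le_ncard hsub ((hXf.image _).union (hUf.image _))
  have h3 : (Sum.inl '' X ∪ Sum.inr '' U : Set (α ⊕ β)).ncard ≤ X.ncard + U.ncard := by
    refine le_trans (Set.ncard_union_le _ _) ?_
    rw [Set.ncard_image_of_injective _ Sum.inl_injective,
        Set.ncard_image_of_injective _ Sum.inr_injective]
  omega

lemma ncard_le_of_subset_range {α ι : Type*} [Finite ι] {S : Set α} (g : ι → α)
    (h : S ⊆ Set.range g) : S.ncard ≤ Nat.card ι := by
  refine (Set.ncard_le_ncard h (Set.finite_range g)).trans ?_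
  rw [← Set.image_univ, ← Set.ncard_univ ι]
  exact Set.ncard_image_le Set.finite_univ

lemma inj4 {α : Type*} {x0 x1 x2 x3 : α} (h01 : x0 ≠ x1) (h02 : x0 ≠ x2) (h03 : x0 ≠ x3)
    (h12 : x1 ≠ x2) (h13 : x1 ≠ x3) (h23 : x2 ≠ x3) :
    Function.Injective ![x0, x1, x2, x3] := by
  intro i j hij
  fin_cases i <;> fin_cases j <;> simp_all

lemma sigma_lb (c d : ℕ) (hc : 1 ≤ c) (hcd : c < d)
    (X : Set (Fin 4 ⊕ (Fin 2 × Fin d ⊕ Fin 2 × Fin c)))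
    (U : Set (Sym2 (Fin 4 ⊕ (Fin 2 × Fin d ⊕ Fin 2 × Fin c))))
    (hXf : X.Finite) (hUf : U.Finite)
    (h01 : ¬(Sum.inl 0 ∈ X ∧ Sum.inl 1 ∈ X))
    (h12 : ¬(Sum.inl 1 ∈ X ∧ Sum.inl 2 ∈ X))
    (h23 : ¬(Sum.inl 2 ∈ X ∧ Sum.inl 3 ∈ X))
    (hU01 : Sum.inl 0 ∉ X → Sum.inl 1 ∉ X → s(Sum.inl 0, Sum.inl 1) ∈ U)
    (hU12 : Sum.inl 1 ∉ X → Sum.inl 2 ∉ X → s(Sum.inl 1, Sum.inl 2) ∈ U)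
    (hU23 : Sum.inl 2 ∉ X → Sum.inl 3 ∉ X → s(Sum.inl 2, Sum.inl 3) ∈ U)
    (hUa0 : ∀ j : Fin d, Sum.inl 0 ∉ X → Sum.inr (Sum.inl (0, j)) ∉ X →
      s(Sum.inl 0, Sum.inr (Sum.inl (0, j))) ∈ U)
    (hUa1 : ∀ j : Fin d, Sum.inl 3 ∉ X → Sum.inr (Sum.inl (1, j)) ∉ X →
      s(Sum.inl 3, Sum.inr (Sum.inl (1, j))) ∈ U)
    (hUb0 : ∀ j : Fin c, Sum.inl 1 ∉ X → Sum.inr (Sum.inr (0, j)) ∉ X →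
      s(Sum.inl 1, Sum.inr (Sum.inr (0, j))) ∈ U)
    (hUb1 : ∀ j : Fin c, Sum.inl 2 ∉ X → Sum.inr (Sum.inr (1, j)) ∉ X →
      s(Sum.inl 2, Sum.inr (Sum.inr (1, j))) ∈ U) :
    2 * c + 3 ≤ X.ncard + U.ncard := by
  classical
  have hle : c + 1 ≤ d := hcd
  by_cases h1 : (Sum.inl 1 : Fin 4 ⊕ (Fin 2 × Fin d ⊕ Fin 2 × Fin c)) ∈ X <;>
    by_cases h2 : (Sum.inl 2 : Fin 4 ⊕ (Fin 2 × Fin d ⊕ Fin 2 × Fin c)) ∈ X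
  · exact absurd ⟨h1, h2⟩ h12
  · -- 1 ∈ X, 2 ∉ X
    have h0 : (Sum.inl 0 : Fin 4 ⊕ (Fin 2 × Fin d ⊕ Fin 2 × Fin c)) ∉ X :=
      fun h0 => h01 ⟨h0, h1⟩
    have key := tok_card_le (ι := Fin (c+1) ⊕ ((Fin c ⊕ Fin 1) ⊕ Fin 1))
      (X := X) (U := U)
      (Sum.elim (fun j => Sum.inr (Sum.inl (0, Fin.castLE hle j)))
        (Sum.elim (Sum.elim (fun j => Sum.inr (Sum.inr (1, j))) (fun _ => Sum.inl 3))
          (fun _ => Sum.inl 1)))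
      (Sum.elim (fun j => s(Sum.inl 0, Sum.inr (Sum.inl (0, Fin.castLE hle j))))
        (Sum.elim (Sum.elim (fun j => s(Sum.inl 2, Sum.inr (Sum.inr (1, j))))
          (fun _ => s(Sum.inl 2, Sum.inl 3)))
          (fun _ => s(Sum.inl 1, Sum.inl 2))))
      ?_ ?_ hXf hUf ?_
    · simp only [Nat.card_eq_fintype_card, Fintype.card_sum, Fintype.card_fin] at key
      omega
    · rintro (j | (k | k) | k) (j' | (k' | k') | k') h <;>
        simp_all [Fin.fin_one_eq_zero]
    · rintro (j | (k | k) | k) (j' | (k' | k') | k') h <;>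
        simp_all [Sym2.eq_iff, Fin.fin_one_eq_zero]
    · rintro (j | (k | k) | k) hx
      · exact hUa0 _ h0 hx
      · exact hUb1 _ h2 hx
      · exact hU23 h2 hx
      · exact absurd h1 hx
  · -- 1 ∉ X, 2 ∈ X
    have h3 : (Sum.inl 3 : Fin 4 ⊕ (Fin 2 × Fin d ⊕ Fin 2 × Fin c)) ∉ X :=
      fun h3 => h23 ⟨h2, h3⟩
    have key := tok_card_le (ι := Fin (c+1) ⊕ ((Fin c ⊕ Fin 1) ⊕ Fin 1))
      (X := X) (U := U)
      (Sum.elim (fun j => Sum.inr (Sum.inl (1, Fin.castLE hle j)))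
        (Sum.elim (Sum.elim (fun j => Sum.inr (Sum.inr (0, j))) (fun _ => Sum.inl 0))
          (fun _ => Sum.inl 2)))
      (Sum.elim (fun j => s(Sum.inl 3, Sum.inr (Sum.inl (1, Fin.castLE hle j))))
        (Sum.elim (Sum.elim (fun j => s(Sum.inl 1, Sum.inr (Sum.inr (0, j))))
          (fun _ => s(Sum.inl 0, Sum.inl 1)))
          (fun _ => s(Sum.inl 1, Sum.inl 2))))
      ?_ ?_ hXf hUf ?_
    · simp only [Nat.card_eq_fintype_card, Fintype.card_sum, Fintype.card_fin] at key
      omega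
    · rintro (j | (k | k) | k) (j' | (k' | k') | k') h <;>
        simp_all [Fin.fin_one_eq_zero]
    · rintro (j | (k | k) | k) (j' | (k' | k') | k') h <;>
        simp_all [Sym2.eq_iff, Fin.fin_one_eq_zero]
    · rintro (j | (k | k) | k) hx
      · exact hUa1 _ h3 hx
      · exact hUb0 _ h1 hx
      · exact hU01 hx h1
      · exact absurd h2 hx
  · -- 1 ∉ X, 2 ∉ X
    have key := tok_card_le (ι := (Fin c ⊕ Fin 1) ⊕ ((Fin c ⊕ Fin 1) ⊕ Fin 1))
      (X := X) (U := U)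
      (Sum.elim (Sum.elim (fun j => Sum.inr (Sum.inr (0, j))) (fun _ => Sum.inl 0))
        (Sum.elim (Sum.elim (fun j => Sum.inr (Sum.inr (1, j))) (fun _ => Sum.inl 3))
          (fun _ => Sum.inl 1)))
      (Sum.elim (Sum.elim (fun j => s(Sum.inl 1, Sum.inr (Sum.inr (0, j))))
          (fun _ => s(Sum.inl 0, Sum.inl 1)))
        (Sum.elim (Sum.elim (fun j => s(Sum.inl 2, Sum.inr (Sum.inr (1, j))))
          (fun _ => s(Sum.inl 2, Sum.inl 3)))
          (fun _ => s(Sum.inl 1, Sum.inl 2))))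
      ?_ ?_ hXf hUf ?_
    · simp only [Nat.card_eq_fintype_card, Fintype.card_sum, Fintype.card_fin] at key
      omega
    · rintro ((k | k) | (k' | k') | k'') ((l | l) | (l' | l') | l'') h <;>
        simp_all [Fin.fin_one_eq_zero]
    · rintro ((k | k) | (k' | k') | k'') ((l | l) | (l' | l') | l'') h <;>
        simp_all [Sym2.eq_iff, Fin.fin_one_eq_zero]
    · rintro ((k | k) | (k' | k') | k'') hx
      · exact hUb0 _ h1 hx
      · exact hU01 hx h1
      · exact hUb1 _ h2 hx
      · exact hU23 h2 hx
      · exact hU12 h1 h2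

/-- For the tree consisting of a path `a₁ b₁ b₂ a₂` with `d` pendant leaves at each `aᵢ`
and `c` pendant leaves at each `bᵢ` (`d > c ≥ 1`), we have `τ(T) = 4` and `σ(T) = 2c+3`.
Here `a₁, b₁, b₂, a₂` are `Sum.inl 0, 1, 2, 3` respectively. -/
theorem stmt_11 (c d : ℕ) (hc : 1 ≤ c) (hcd : c < d)
    (G : SimpleGraph (Fin 4 ⊕ (Fin 2 × Fin d ⊕ Fin 2 × Fin c)))
    (hG : G = SimpleGraph.fromEdgeSet (
      {s(Sum.inl 0, Sum.inl 1), s(Sum.inl 1, Sum.inl 2), s(Sum.inl 2, Sum.inl 3)} ∪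
      (Set.range fun j : Fin d => s(Sum.inl 0, Sum.inr (Sum.inl (0, j)))) ∪
      (Set.range fun j : Fin d => s(Sum.inl 3, Sum.inr (Sum.inl (1, j)))) ∪
      (Set.range fun j : Fin c => s(Sum.inl 1, Sum.inr (Sum.inr (0, j)))) ∪
      (Set.range fun j : Fin c => s(Sum.inl 2, Sum.inr (Sum.inr (1, j)))))) :
    graphTau G = 4 ∧ graphSigma G = 2 * c + 3 := by
  classical
  have hd1 : 0 < d := by omega
  -- the edge set of G
  have hedge : G.edgeSet =
      ({s(Sum.inl 0, Sum.inl 1), s(Sum.inl 1, Sum.inl 2), s(Sum.inl 2, Sum.inl 3)} ∪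
      (Set.range fun j : Fin d => s(Sum.inl 0, Sum.inr (Sum.inl (0, j)))) ∪
      (Set.range fun j : Fin d => s(Sum.inl 3, Sum.inr (Sum.inl (1, j)))) ∪
      (Set.range fun j : Fin c => s(Sum.inl 1, Sum.inr (Sum.inr (0, j)))) ∪
      (Set.range fun j : Fin c => s(Sum.inl 2, Sum.inr (Sum.inr (1, j))))) := by
    rw [hG, SimpleGraph.edgeSet_fromEdgeSet, sdiff_eq_left]
    rw [Set.disjoint_left]
    intro e he
    simp only [Set.mem_union, Set.mem_insert_iff, Set.mem_singleton_iff, Set.mem_range] at he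
    obtain ((((h | h | h) | ⟨j, rfl⟩) | ⟨j, rfl⟩) | ⟨j, rfl⟩) | ⟨j, rfl⟩ := he <;>
      first
        | (subst h; simp [Sym2.mk_isDiag_iff])
        | simp [Sym2.mk_isDiag_iff]
  -- some edges
  have e01 : s((Sum.inl 0 : Fin 4 ⊕ (Fin 2 × Fin d ⊕ Fin 2 × Fin c)), Sum.inl 1) ∈ G.edgeSet := by
    rw [hedge]; left; left; left; left; simp
  have e12 : s((Sum.inl 1 : Fin 4 ⊕ (Fin 2 × Fin d ⊕ Fin 2 × Fin c)), Sum.inl 2) ∈ G.edgeSet := by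
    rw [hedge]; left; left; left; left; simp
  have e23 : s((Sum.inl 2 : Fin 4 ⊕ (Fin 2 × Fin d ⊕ Fin 2 × Fin c)), Sum.inl 3) ∈ G.edgeSet := by
    rw [hedge]; left; left; left; left; simp
  have ea0 : ∀ j : Fin d,
      s((Sum.inl 0 : Fin 4 ⊕ (Fin 2 × Fin d ⊕ Fin 2 × Fin c)), Sum.inr (Sum.inl (0, j))) ∈
        G.edgeSet := by
    intro j; rw [hedge]; left; left; left; right; exact ⟨j, rfl⟩
  have ea1 : ∀ j : Fin d,
      s((Sum.inl 3 : Fin 4 ⊕ (Fin 2 × Fin d ⊕ Fin 2 × Fin c)), Sum.inr (Sum.inl (1, j))) ∈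
        G.edgeSet := by
    intro j; rw [hedge]; left; left; right; exact ⟨j, rfl⟩
  have eb0 : ∀ j : Fin c,
      s((Sum.inl 1 : Fin 4 ⊕ (Fin 2 × Fin d ⊕ Fin 2 × Fin c)), Sum.inr (Sum.inr (0, j))) ∈
        G.edgeSet := by
    intro j; rw [hedge]; left; right; exact ⟨j, rfl⟩
  have eb1 : ∀ j : Fin c,
      s((Sum.inl 2 : Fin 4 ⊕ (Fin 2 × Fin d ⊕ Fin 2 × Fin c)), Sum.inr (Sum.inr (1, j))) ∈
        G.edgeSet := by
    intro j; rw [hedge]; right; exact ⟨j, rfl⟩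
  constructor
  · -- graphTau G = 4
    have S0cov : ∀ e ∈ G.edgeSet,
        ∃ x ∈ ({Sum.inl 0, Sum.inl 1, Sum.inl 2, Sum.inl 3} :
          Set (Fin 4 ⊕ (Fin 2 × Fin d ⊕ Fin 2 × Fin c))), x ∈ e := by
      intro e he
      rw [hedge] at he
      simp only [Set.mem_union, Set.mem_insert_iff, Set.mem_singleton_iff, Set.mem_range] at he
      obtain ((((h | h | h) | ⟨j, rfl⟩) | ⟨j, rfl⟩) | ⟨j, rfl⟩) | ⟨j, rfl⟩ := he
      · exact ⟨Sum.inl 0, by simp, h ▸ Sym2.mem_mk_left _ _⟩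
      · exact ⟨Sum.inl 1, by simp, h ▸ Sym2.mem_mk_left _ _⟩
      · exact ⟨Sum.inl 2, by simp, h ▸ Sym2.mem_mk_left _ _⟩
      · exact ⟨Sum.inl 0, by simp, Sym2.mem_mk_left _ _⟩
      · exact ⟨Sum.inl 3, by simp, Sym2.mem_mk_left _ _⟩
      · exact ⟨Sum.inl 1, by simp, Sym2.mem_mk_left _ _⟩
      · exact ⟨Sum.inl 2, by simp, Sym2.mem_mk_left _ _⟩
    have hτmem : ({Sum.inl 0, Sum.inl 1, Sum.inl 2, Sum.inl 3} :
        Set (Fin 4 ⊕ (Fin 2 × Fin d ⊕ Fin 2 × Fin c))).ncard ∈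
        {m | ∃ S : Set (Fin 4 ⊕ (Fin 2 × Fin d ⊕ Fin 2 × Fin c)),
          (∀ e ∈ G.edgeSet, ∃ x ∈ S, x ∈ e) ∧ S.Finite ∧ m = S.ncard} :=
      ⟨_, S0cov, Set.toFinite _, rfl⟩
    have hS0card : ({Sum.inl 0, Sum.inl 1, Sum.inl 2, Sum.inl 3} :
        Set (Fin 4 ⊕ (Fin 2 × Fin d ⊕ Fin 2 × Fin c))).ncard ≤ 4 := by
      have := ncard_le_of_subset_range
        (S := ({Sum.inl 0, Sum.inl 1, Sum.inl 2, Sum.inl 3} :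
          Set (Fin 4 ⊕ (Fin 2 × Fin d ⊕ Fin 2 × Fin c))))
        (fun i : Fin 4 => Sum.inl i) ?_
      · simpa using this
      · intro x hx
        simp only [Set.mem_insert_iff, Set.mem_singleton_iff] at hx
        obtain rfl | rfl | rfl | rfl := hx
        exacts [⟨0, rfl⟩, ⟨1, rfl⟩, ⟨2, rfl⟩, ⟨3, rfl⟩]
    have hτlb : ∀ m ∈ {m | ∃ S : Set (Fin 4 ⊕ (Fin 2 × Fin d ⊕ Fin 2 × Fin c)),
        (∀ e ∈ G.edgeSet, ∃ x ∈ S, x ∈ e) ∧ S.Finite ∧ m = S.ncard}, 4 ≤ m := by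
      rintro m ⟨S, hcov, hSf, rfl⟩
      obtain ⟨x0, hx0S, hx0⟩ := hcov _ (ea0 ⟨0, hd1⟩)
      obtain ⟨x1, hx1S, hx1⟩ := hcov _ (eb0 ⟨0, hc⟩)
      obtain ⟨x2, hx2S, hx2⟩ := hcov _ (eb1 ⟨0, hc⟩)
      obtain ⟨x3, hx3S, hx3⟩ := hcov _ (ea1 ⟨0, hd1⟩)
      rw [Sym2.mem_iff] at hx0 hx1 hx2 hx3
      have hne01 : x0 ≠ x1 := by rcases hx0 with rfl | rfl <;> rcases hx1 with rfl | rfl <;> simp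
      have hne02 : x0 ≠ x2 := by rcases hx0 with rfl | rfl <;> rcases hx2 with rfl | rfl <;> simp
      have hne03 : x0 ≠ x3 := by rcases hx0 with rfl | rfl <;> rcases hx3 with rfl | rfl <;> simp
      have hne12 : x1 ≠ x2 := by rcases hx1 with rfl | rfl <;> rcases hx2 with rfl | rfl <;> simp
      have hne13 : x1 ≠ x3 := by rcases hx1 with rfl | rfl <;> rcases hx3 with rfl | rfl <;> simp
      have hne23 : x2 ≠ x3 := by rcases hx2 with rfl | rfl <;> rcases hx3 with rfl | rfl <;> simp
      have hinj : Function.Injective ![x0, x1, x2, x3] :=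
        inj4 hne01 hne02 hne03 hne12 hne13 hne23
      have key := tok_card_le (ι := Fin 4) (X := S)
        (U := (∅ : Set (Fin 4 ⊕ (Fin 2 × Fin d ⊕ Fin 2 × Fin c))))
        ![x0, x1, x2, x3] ![x0, x1, x2, x3] hinj hinj hSf (Set.finite_empty)
        (fun i hi => absurd (by fin_cases i <;> assumption) hi)
      simpa using key
    have h1 := Nat.sInf_le hτmem
    have h2 := le_csInf ⟨_, hτmem⟩ hτlb
    unfold graphTau
    omega
  · -- graphSigma G = 2c+3
    have hadjs : ∀ u v, s(u, v) ∈ G.edgeSet → G.Adj u v := fun u v h =>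
      G.mem_edgeSet.mp h
    -- upper bound witness
    have hX0ind : ∀ x ∈ ({Sum.inl 0, Sum.inl 3} :
        Set (Fin 4 ⊕ (Fin 2 × Fin d ⊕ Fin 2 × Fin c))), ∀ y ∈
        ({Sum.inl 0, Sum.inl 3} : Set (Fin 4 ⊕ (Fin 2 × Fin d ⊕ Fin 2 × Fin c))),
        ¬ G.Adj x y := by
      intro x hx y hy hadj
      have hmem := G.mem_edgeSet.mpr hadj
      rw [hedge] at hmem
      simp only [Set.mem_insert_iff, Set.mem_singleton_iff] at hx hy
      simp only [Set.mem_union, Set.mem_insert_iff, Set.mem_singleton_iff, Set.mem_range] at hmem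
      obtain rfl | rfl := hx <;> obtain rfl | rfl := hy <;>
        simp_all [Sym2.eq_iff]
    have hσmem : (({Sum.inl 0, Sum.inl 3} :
          Set (Fin 4 ⊕ (Fin 2 × Fin d ⊕ Fin 2 × Fin c))).ncard +
        {e ∈ G.edgeSet | ∀ x ∈ ({Sum.inl 0, Sum.inl 3} :
          Set (Fin 4 ⊕ (Fin 2 × Fin d ⊕ Fin 2 × Fin c))), x ∉ e}.ncard) ∈
        {m | ∃ X : Set (Fin 4 ⊕ (Fin 2 × Fin d ⊕ Fin 2 × Fin c)),
          (∀ x ∈ X, ∀ y ∈ X, ¬ G.Adj x y) ∧ X.Finite ∧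
          m = X.ncard + {e ∈ G.edgeSet | ∀ x ∈ X, x ∉ e}.ncard} :=
      ⟨_, hX0ind, Set.toFinite _, rfl⟩
    have hup : ({Sum.inl 0, Sum.inl 3} :
          Set (Fin 4 ⊕ (Fin 2 × Fin d ⊕ Fin 2 × Fin c))).ncard +
        {e ∈ G.edgeSet | ∀ x ∈ ({Sum.inl 0, Sum.inl 3} :
          Set (Fin 4 ⊕ (Fin 2 × Fin d ⊕ Fin 2 × Fin c))), x ∉ e}.ncard ≤ 2 * c + 3 := by
      have hpair : ({Sum.inl 0, Sum.inl 3} :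
          Set (Fin 4 ⊕ (Fin 2 × Fin d ⊕ Fin 2 × Fin c))).ncard = 2 :=
        Set.ncard_pair (by simp)
      have hU0 : {e ∈ G.edgeSet | ∀ x ∈ ({Sum.inl 0, Sum.inl 3} :
          Set (Fin 4 ⊕ (Fin 2 × Fin d ⊕ Fin 2 × Fin c))), x ∉ e}.ncard ≤ 2 * c + 1 := by
        have := ncard_le_of_subset_range (ι := Fin 1 ⊕ Fin c ⊕ Fin c)
          (S := {e ∈ G.edgeSet | ∀ x ∈ ({Sum.inl 0, Sum.inl 3} :
            Set (Fin 4 ⊕ (Fin 2 × Fin d ⊕ Fin 2 × Fin c))), x ∉ e})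
          (Sum.elim (fun _ => s(Sum.inl 1, Sum.inl 2))
            (Sum.elim (fun j => s(Sum.inl 1, Sum.inr (Sum.inr (0, j))))
              (fun j => s(Sum.inl 2, Sum.inr (Sum.inr (1, j)))))) ?_
        · simp only [Nat.card_eq_fintype_card, Fintype.card_sum, Fintype.card_fin] at this
          omega
        · rintro e ⟨he, hXe⟩
          rw [hedge] at he
          simp only [Set.mem_union, Set.mem_insert_iff, Set.mem_singleton_iff,
            Set.mem_range] at he
          obtain ((((h | h | h) | ⟨j, rfl⟩) | ⟨j, rfl⟩) | ⟨j, rfl⟩) | ⟨j, rfl⟩ := he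
          · exact absurd (h ▸ Sym2.mem_mk_left _ _) (hXe (Sum.inl 0) (by simp))
          · exact ⟨Sum.inl 0, by subst h; rfl⟩
          · exact absurd (h ▸ Sym2.mem_mk_right _ _) (hXe (Sum.inl 3) (by simp))
          · exact absurd (Sym2.mem_mk_left _ _) (hXe (Sum.inl 0) (by simp))
          · exact absurd (Sym2.mem_mk_left _ _) (hXe (Sum.inl 3) (by simp))
          · exact ⟨Sum.inr (Sum.inl j), rfl⟩
          · exact ⟨Sum.inr (Sum.inr j), rfl⟩
      omega
    have hσlb : ∀ m ∈ {m | ∃ X : Set (Fin 4 ⊕ (Fin 2 × Fin d ⊕ Fin 2 × Fin c)),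
        (∀ x ∈ X, ∀ y ∈ X, ¬ G.Adj x y) ∧ X.Finite ∧
        m = X.ncard + {e ∈ G.edgeSet | ∀ x ∈ X, x ∉ e}.ncard}, 2 * c + 3 ≤ m := by
      rintro m ⟨X, hind, hXf, rfl⟩
      have hUgen : ∀ u v, s(u, v) ∈ G.edgeSet → u ∉ X → v ∉ X →
          s(u, v) ∈ {e ∈ G.edgeSet | ∀ x ∈ X, x ∉ e} := by
        intro u v he hu hv
        refine ⟨he, fun x hx hxe => ?_⟩
        rcases Sym2.mem_iff.mp hxe with rfl | rfl
        exacts [hu hx, hv hx]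
      exact sigma_lb c d hc hcd X _ hXf (Set.toFinite _)
        (fun ⟨ha, hb⟩ => hind _ ha _ hb (hadjs _ _ e01))
        (fun ⟨ha, hb⟩ => hind _ ha _ hb (hadjs _ _ e12))
        (fun ⟨ha, hb⟩ => hind _ ha _ hb (hadjs _ _ e23))
        (fun h0 h1 => hUgen _ _ e01 h0 h1)
        (fun h1 h2 => hUgen _ _ e12 h1 h2)
        (fun h2 h3 => hUgen _ _ e23 h2 h3)
        (fun j h0 hj => hUgen _ _ (ea0 j) h0 hj)
        (fun j h3 hj => hUgen _ _ (ea1 j) h3 hj)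
        (fun j h1 hj => hUgen _ _ (eb0 j) h1 hj)
        (fun j h2 hj => hUgen _ _ (eb1 j) h2 hj)
    have h1 := Nat.sInf_le hσmem
    have h2 := le_csInf ⟨_, hσmem⟩ hσlb
    unfold graphSigma
    omega
end

section
/- Let T be a forest with at least one edge, k ≥ 3, σ = σ(T). Let Y be a set of σ − 1 vertices and Z a disjoint set of n − σ + 1 vertices. Then the k-uniform hypergraph consisting of all k-sets E ⊆ Y ∪ Z with |E ∩ Y| = 1 contains no copy of the k-expansion T^{(k)}. Consequently ex_k(n, T^{(k)}) ≥ (σ − 1)·C(n − σ + 1, k − 1). -/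
/-- Product construction: with `Y` of size `σ(T) - 1` inside an `n`-set `W`, the `k`-uniform
hypergraph of all `k`-subsets of `W` meeting `Y` in exactly one vertex contains no copy of
`T^(k)`; consequently `ex_k(n, T^(k)) ≥ (σ-1)·C(n-σ+1, k-1)`. -/
theorem stmt_12 {V : Type*} [Fintype V] [DecidableEq V] (T : SimpleGraph V)
    [DecidableRel T.Adj] (hT : T.IsAcyclic) (hne : T.edgeSet.Nonempty)
    (k n : ℕ) (hk : 3 ≤ k)
    (W Y : Finset ℕ) (hW : W.card = n) (hYW : Y ⊆ W) (hY : Y.card = graphSigma T - 1)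
    (H : Finset (Finset ℕ))
    (hH : H = (W.powersetCard k).filter (fun E => (E ∩ Y).card = 1)) :
    ¬ ContainsCopy H (expansion k T) ∧
      (graphSigma T - 1) * Nat.choose (n - graphSigma T + 1) (k - 1) ≤ H.card := by
  classical
  have hEfin : T.edgeSet.Finite := Set.toFinite _
  -- σ ≥ 1
  have hσ1 : 1 ≤ graphSigma T := by
    by_contra h
    have hσ0 : graphSigma T = 0 := by omega
    rw [graphSigma] at hσ0
    have hnonempty : {m | ∃ X : Set V, (∀ x ∈ X, ∀ y ∈ X, ¬ T.Adj x y) ∧ X.Finite ∧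
        m = X.ncard + {e ∈ T.edgeSet | ∀ x ∈ X, x ∉ e}.ncard}.Nonempty := by
      refine ⟨(∅ : Set V).ncard + {e ∈ T.edgeSet | ∀ x ∈ (∅ : Set V), x ∉ e}.ncard,
        (∅ : Set V), ?_, Set.finite_empty, rfl⟩
      simp
    have h0 : (0 : ℕ) ∈ {m | ∃ X : Set V, (∀ x ∈ X, ∀ y ∈ X, ¬ T.Adj x y) ∧ X.Finite ∧
        m = X.ncard + {e ∈ T.edgeSet | ∀ x ∈ X, x ∉ e}.ncard} := by
      rcases Nat.sInf_eq_zero.mp hσ0 with h0 | hempty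
      · exact h0
      · rw [hempty] at hnonempty; exact absurd hnonempty (by simp)
    obtain ⟨X, hXind, hXfin, hXeq⟩ := h0
    have hX0 : X.ncard = 0 := by omega
    have hU0 : {e ∈ T.edgeSet | ∀ x ∈ X, x ∉ e}.ncard = 0 := by omega
    have hXempty : X = ∅ := (Set.ncard_eq_zero hXfin).mp hX0
    have hUfin : {e ∈ T.edgeSet | ∀ x ∈ X, x ∉ e}.Finite :=
      hEfin.subset (Set.sep_subset _ _)
    have hUempty : {e ∈ T.edgeSet | ∀ x ∈ X, x ∉ e} = ∅ :=
      (Set.ncard_eq_zero hUfin).mp hU0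
    obtain ⟨e, he⟩ := hne
    have : e ∈ {e ∈ T.edgeSet | ∀ x ∈ X, x ∉ e} := by
      refine ⟨he, ?_⟩
      intro x hx
      rw [hXempty] at hx
      exact absurd hx (by simp)
    rw [hUempty] at this
    exact absurd this (by simp)
  have hkm2 : Nonempty (Fin (k - 2)) := ⟨⟨0, by omega⟩⟩
  -- membership in H
  have hHmem : ∀ E : Finset ℕ, E ∈ H ↔ (E ⊆ W ∧ E.card = k ∧ (E ∩ Y).card = 1) := by
    intro E
    rw [hH, Finset.mem_filter, Finset.mem_powersetCard]
    tauto
  constructor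
  · -- Part 1: no copy of the expansion
    rintro ⟨f, hinj, hmap⟩
    set Ek : Sym2 V → Finset (V ⊕ Sym2 V × Fin (k - 2)) := fun e =>
      ((Finset.univ.filter (fun v => v ∈ e)).image Sum.inl) ∪
        (Finset.univ.image (fun i : Fin (k - 2) => Sum.inr (e, i))) with hEkdef
    have hEkmem : ∀ e : Sym2 V, ∀ b, b ∈ Ek e ↔
        (∃ v ∈ e, b = Sum.inl v) ∨ ∃ i : Fin (k - 2), b = Sum.inr (e, i) := by
      intro e b
      simp only [hEkdef, Finset.mem_union, Finset.mem_image, Finset.mem_filter,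
        Finset.mem_univ, true_and]
      constructor
      · rintro (⟨v, hv, rfl⟩ | ⟨i, rfl⟩)
        · exact Or.inl ⟨v, hv, rfl⟩
        · exact Or.inr ⟨i, rfl⟩
      · rintro (⟨v, hv, rfl⟩ | ⟨i, rfl⟩)
        · exact Or.inl ⟨v, hv, rfl⟩
        · exact Or.inr ⟨i, rfl⟩
    have hEkexp : ∀ e ∈ T.edgeSet, Ek e ∈ expansion k T := by
      intro e he
      exact Finset.mem_image_of_mem _ (SimpleGraph.mem_edgeFinset.mpr he)
    have hsup : ∀ e ∈ T.edgeSet, ∀ b ∈ Ek e,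
        b ∈ ((expansion k T).sup id : Finset (V ⊕ Sym2 V × Fin (k - 2))) := by
      intro e he b hb
      exact Finset.mem_sup.mpr ⟨Ek e, hEkexp e he, hb⟩
    have hinl_sup : ∀ {x : V} {e : Sym2 V}, e ∈ T.edgeSet → x ∈ e →
        Sum.inl x ∈ ((expansion k T).sup id : Finset (V ⊕ Sym2 V × Fin (k - 2))) := by
      intro x e he hx
      exact hsup e he _ ((hEkmem e _).mpr (Or.inl ⟨x, hx, rfl⟩))
    have hinr_sup : ∀ {e : Sym2 V} {i : Fin (k - 2)}, e ∈ T.edgeSet →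
        Sum.inr (e, i) ∈ ((expansion k T).sup id : Finset (V ⊕ Sym2 V × Fin (k - 2))) := by
      intro e i he
      exact hsup e he _ ((hEkmem e _).mpr (Or.inr ⟨i, rfl⟩))
    have hEH : ∀ e ∈ T.edgeSet, ((Ek e).image f ∩ Y).card = 1 := by
      intro e he
      exact ((hHmem _).mp (hmap _ (hEkexp e he))).2.2
    -- the candidate independent set
    set X : Set V := {v | (∃ e ∈ T.edgeSet, v ∈ e) ∧ f (Sum.inl v) ∈ Y} with hXdef
    have hXmem : ∀ v : V, v ∈ X ↔ ((∃ e ∈ T.edgeSet, v ∈ e) ∧ f (Sum.inl v) ∈ Y) := by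
      intro v; rw [hXdef]; rfl
    have hXfin : X.Finite := Set.toFinite _
    have hXind : ∀ x ∈ X, ∀ y ∈ X, ¬ T.Adj x y := by
      intro x hx y hy hadj
      have he : s(x, y) ∈ T.edgeSet := T.mem_edgeSet.mpr hadj
      have hxe : x ∈ s(x, y) := Sym2.mem_mk_left x y
      have hye : y ∈ s(x, y) := Sym2.mem_mk_right x y
      have hfx : f (Sum.inl x) ∈ (Ek s(x, y)).image f ∩ Y :=
        Finset.mem_inter.mpr ⟨Finset.mem_image_of_mem f
          ((hEkmem _ _).mpr (Or.inl ⟨x, hxe, rfl⟩)), ((hXmem x).mp hx).2⟩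
      have hfy : f (Sum.inl y) ∈ (Ek s(x, y)).image f ∩ Y :=
        Finset.mem_inter.mpr ⟨Finset.mem_image_of_mem f
          ((hEkmem _ _).mpr (Or.inl ⟨y, hye, rfl⟩)), ((hXmem y).mp hy).2⟩
      have hne' : f (Sum.inl x) ≠ f (Sum.inl y) := by
        intro heq
        have := hinj (hinl_sup he hxe) (hinl_sup he hye) heq
        exact hadj.ne (Sum.inl.inj this)
      have h2 : 1 < ((Ek s(x, y)).image f ∩ Y).card :=
        Finset.one_lt_card.mpr ⟨_, hfx, _, hfy, hne'⟩
      rw [hEH _ he] at h2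
      omega
    -- every uncovered edge has a private vertex mapped into Y
    have huncov : ∀ e ∈ T.edgeSet, (∀ x ∈ X, x ∉ e) →
        ∃ i : Fin (k - 2), f (Sum.inr (e, i)) ∈ Y := by
      intro e he hu
      have h1 : ((Ek e).image f ∩ Y).card = 1 := hEH e he
      have hnonempty : ((Ek e).image f ∩ Y).Nonempty := by
        rw [← Finset.card_pos, h1]; norm_num
      obtain ⟨a, ha⟩ := hnonempty
      obtain ⟨haE, haY⟩ := Finset.mem_inter.mp ha
      obtain ⟨b, hb, rfl⟩ := Finset.mem_image.mp haE
      rcases (hEkmem e b).mp hb with ⟨v, hv, rfl⟩ | ⟨i, rfl⟩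
      · exact absurd hv (hu v ((hXmem v).mpr ⟨⟨e, he, hv⟩, haY⟩))
      · exact ⟨i, haY⟩
    have hch : ∀ e : Sym2 V, ∃ i : Fin (k - 2),
        (e ∈ T.edgeSet ∧ ∀ x ∈ X, x ∉ e) → f (Sum.inr (e, i)) ∈ Y := by
      intro e
      by_cases h : e ∈ T.edgeSet ∧ ∀ x ∈ X, x ∉ e
      · obtain ⟨i, hi⟩ := huncov e h.1 h.2
        exact ⟨i, fun _ => hi⟩
      · exact ⟨Classical.arbitrary _, fun h' => absurd h' h⟩
    choose ι hι using hch
    set U : Set (Sym2 V) := {e ∈ T.edgeSet | ∀ x ∈ X, x ∉ e} with hUdef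
    have hUmem : ∀ e : Sym2 V, e ∈ U ↔ (e ∈ T.edgeSet ∧ ∀ x ∈ X, x ∉ e) := by
      intro e; rw [hUdef]; rfl
    have hUfin : U.Finite := hEfin.subset (Set.sep_subset _ _)
    set XF := hXfin.toFinset with hXF
    set UF := hUfin.toFinset with hUF
    have hXFm : ∀ x ∈ XF, x ∈ X := fun x hx => hXfin.mem_toFinset.mp hx
    have hUFm : ∀ e ∈ UF, e ∈ U := fun e he => hUfin.mem_toFinset.mp he
    set A1 := XF.image (fun x => f (Sum.inl x)) with hA1
    set A2 := UF.image (fun e => f (Sum.inr (e, ι e))) with hA2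
    have hc1 : A1.card = XF.card := by
      apply Finset.card_image_of_injOn
      intro x hx x' hx' heq
      obtain ⟨⟨e, he, hv⟩, -⟩ := (hXmem x).mp (hXFm x hx)
      obtain ⟨⟨e', he', hv'⟩, -⟩ := (hXmem x').mp (hXFm x' hx')
      exact Sum.inl.inj (hinj (hinl_sup he hv) (hinl_sup he' hv') heq)
    have hc2 : A2.card = UF.card := by
      apply Finset.card_image_of_injOn
      intro e he e' he' heq
      have h1 := ((hUmem e).mp (hUFm e he)).1
      have h1' := ((hUmem e').mp (hUFm e' he')).1
      have := hinj (hinr_sup h1) (hinr_sup h1') heq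
      exact (Prod.ext_iff.mp (Sum.inr.inj this)).1
    have hdisj : Disjoint A1 A2 := by
      rw [Finset.disjoint_left]
      intro a ha1 ha2
      obtain ⟨x, hx, rfl⟩ := Finset.mem_image.mp ha1
      obtain ⟨e, he, heq⟩ := Finset.mem_image.mp ha2
      obtain ⟨⟨e0, he0, hv0⟩, -⟩ := (hXmem x).mp (hXFm x hx)
      have := hinj (hinr_sup ((hUmem e).mp (hUFm e he)).1) (hinl_sup he0 hv0) heq
      simp at this
    have hsubY : A1 ∪ A2 ⊆ Y := by
      intro a ha
      rcases Finset.mem_union.mp ha with h | h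
      · obtain ⟨x, hx, rfl⟩ := Finset.mem_image.mp h
        exact ((hXmem x).mp (hXFm x hx)).2
      · obtain ⟨e, he, rfl⟩ := Finset.mem_image.mp h
        exact hι e ((hUmem e).mp (hUFm e he))
    have hcard : XF.card + UF.card ≤ Y.card := by
      rw [← hc1, ← hc2, ← Finset.card_union_of_disjoint hdisj]
      exact Finset.card_le_card hsubY
    have hσle : graphSigma T ≤ X.ncard + U.ncard := by
      rw [graphSigma]
      exact Nat.sInf_le ⟨X, hXind, hXfin, by rw [hUdef]⟩
    have hnX : X.ncard = XF.card := by
      rw [hXF, Set.ncard_eq_toFinset_card X hXfin]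
    have hnU : U.ncard = UF.card := by
      rw [hUF, Set.ncard_eq_toFinset_card U hUfin]
    omega
  · -- Part 2: the counting lower bound
    have hmapsto : ∀ p ∈ Y ×ˢ ((W \ Y).powersetCard (k - 1)), insert p.1 p.2 ∈ H := by
      rintro ⟨y, S⟩ hp
      obtain ⟨hy, hS⟩ := Finset.mem_product.mp hp
      obtain ⟨hSsub, hScard⟩ := Finset.mem_powersetCard.mp hS
      have hyS : y ∉ S := fun h => (Finset.mem_sdiff.mp (hSsub h)).2 hy
      refine (hHmem _).mpr ⟨?_, ?_, ?_⟩
      · intro a ha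
        rcases Finset.mem_insert.mp ha with rfl | h
        · exact hYW hy
        · exact (Finset.mem_sdiff.mp (hSsub h)).1
      · rw [Finset.card_insert_of_notMem hyS, hScard]; omega
      · have hSY : S ∩ Y = ∅ := by
          rw [Finset.eq_empty_iff_forall_notMem]
          intro a ha
          obtain ⟨haS, haY⟩ := Finset.mem_inter.mp ha
          exact (Finset.mem_sdiff.mp (hSsub haS)).2 haY
        rw [Finset.insert_inter_of_mem hy, hSY]
        simp
    have hinjp : Set.InjOn (fun p : ℕ × Finset ℕ => insert p.1 p.2)
        ↑(Y ×ˢ ((W \ Y).powersetCard (k - 1))) := by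
      rintro ⟨y, S⟩ hp ⟨y', S'⟩ hp' heq
      simp only [Finset.coe_product, Set.mem_prod, Finset.mem_coe] at hp hp'
      obtain ⟨hy, hS⟩ := hp
      obtain ⟨hy', hS'⟩ := hp'
      obtain ⟨hSsub, -⟩ := Finset.mem_powersetCard.mp hS
      obtain ⟨hSsub', -⟩ := Finset.mem_powersetCard.mp hS'
      have hyS : y ∉ S := fun h => (Finset.mem_sdiff.mp (hSsub h)).2 hy
      have hyS' : y' ∉ S' := fun h => (Finset.mem_sdiff.mp (hSsub' h)).2 hy'
      simp only at heq
      have hyy : y' = y := by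
        have : y' ∈ insert y S := by rw [heq]; exact Finset.mem_insert_self _ _
        rcases Finset.mem_insert.mp this with h | h
        · exact h
        · exact absurd hy' (Finset.mem_sdiff.mp (hSsub h)).2
      have hSS : S = S' :=
        calc S = (insert y S).erase y := (Finset.erase_insert hyS).symm
        _ = (insert y' S').erase y := by rw [heq]
        _ = (insert y' S').erase y' := by rw [hyy]
        _ = S' := Finset.erase_insert hyS'
      rw [hSS, hyy]
    have hle := Finset.card_le_card_of_injOn _ hmapsto hinjp
    rw [Finset.card_product, Finset.card_powersetCard, Finset.card_sdiff_of_subset hYW, hW, hY] at hle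
    have hYn : graphSigma T - 1 ≤ n := by
      rw [← hY, ← hW]; exact Finset.card_le_card hYW
    rcases le_or_gt (graphSigma T) n with h | h
    · have heq : n - graphSigma T + 1 = n - (graphSigma T - 1) := by omega
      rw [heq]; exact hle
    · have hch0 : (n - graphSigma T + 1).choose (k - 1) = 0 := by
        apply Nat.choose_eq_zero_of_lt
        omega
      rw [hch0, Nat.mul_zero]
      exact Nat.zero_le _
end

section
/- Let H be a graph with q edges and let s = k·q. Let 𝒻 be a k-uniform hypergraph and let G₂ be the graph on the vertex set of 𝒻 where xy is an edge iff the kernel degree deg*_𝒻({x,y}) ≥ s (i.e., 𝒻 contains a Δ-system of size s with kernel {x,y}). If H is a subgraph of G₂, then 𝒻 contains a copy of the k-expansion H^{(k)}. -/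
/-- `F` contains a Δ-system of size `s` with kernel `C`. -/
def HasDelta (F : Finset (Finset ℕ)) (C : Finset ℕ) (s : ℕ) : Prop :=
  ∃ D ⊆ F, D.card = s ∧ (∀ E ∈ D, C ⊆ E) ∧ ∀ E ∈ D, ∀ E' ∈ D, E ≠ E' → E ∩ E' = C

/-!
Greedy embedding. Put `V(H)` into `ℕ` by `g` and treat the edges of `H` one at a time: for an edge
`xy`, the petals `E \ {g x, g y}` of a Δ-system with kernel `{g x, g y}` are pairwise disjoint, so
at most `|B|` of them meet a given set `B`. Forbidding the `2q - 2` other old vertices and the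
`(q - 1)(k - 2)` new vertices chosen so far leaves fewer than `kq` forbidden points, hence some
petal is free, and its `k - 2` points become the new vertices of `xy`.
-/

open Finset

lemma HasDelta.exists_petal_disjoint {F : Finset (Finset ℕ)} {C : Finset ℕ} {s : ℕ}
    (hΔ : HasDelta F C s) {B : Finset ℕ} (hB : B.card < s) :
    ∃ E ∈ F, C ⊆ E ∧ Disjoint (E \ C) B := by
  obtain ⟨D, hDF, rfl, hCD, hinter⟩ := hΔ
  by_contra! hmeet
  have hpetals : (D : Set (Finset ℕ)).PairwiseDisjoint fun E => (E \ C) ∩ B := by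
    intro E hE E' hE' hne
    refine disjoint_left.2 fun x hx hx' => ?_
    simp only [mem_inter, mem_sdiff] at hx hx'
    have hxC : x ∈ E ∩ E' := mem_inter.2 ⟨hx.1.1, hx'.1.1⟩
    rw [hinter E hE E' hE' hne] at hxC
    exact hx.1.2 hxC
  have hDB : D.card ≤ B.card :=
    calc D.card = ∑ _E ∈ D, 1 := card_eq_sum_ones D
      _ ≤ ∑ E ∈ D, ((E \ C) ∩ B).card := sum_le_sum fun E hE =>
          (not_disjoint_iff_nonempty_inter.1 (hmeet E (hDF hE) (hCD E hE))).card_pos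
      _ = (D.biUnion fun E => (E \ C) ∩ B).card := (card_biUnion hpetals).symm
      _ ≤ B.card := card_le_card (biUnion_subset.2 fun _ _ => inter_subset_right)
  omega

lemma card_biUnion_sdiff_le {ι β : Type*} [DecidableEq ι] [DecidableEq β] {s : Finset ι}
    {t : ι → Finset β} {n : ℕ} (ht : ∀ i ∈ s, (t i).card ≤ n) {a : ι} (ha : a ∈ s) :
    (s.biUnion t \ t a).card ≤ (s.card - 1) * n := by
  have hsub : s.biUnion t \ t a ⊆ (s.erase a).biUnion t := by
    intro x hx
    obtain ⟨hx, hxa⟩ := mem_sdiff.1 hx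
    obtain ⟨i, hi, hxi⟩ := mem_biUnion.1 hx
    exact mem_biUnion.2 ⟨i, mem_erase.2 ⟨by rintro rfl; exact hxa hxi, hi⟩, hxi⟩
  rw [← card_erase_of_mem ha]
  exact (card_le_card hsub).trans
    (card_biUnion_le_card_mul _ _ _ fun i hi => ht i (mem_of_mem_erase hi))

lemma exists_pairwiseDisjoint_petals {ι : Type*} [DecidableEq ι] (F : Finset (Finset ℕ))
    (C : ι → Finset ℕ) (A : Finset ℕ) (p s : ℕ) (I : Finset ι)
    (hp : ∀ i ∈ I, ∀ E ∈ F, C i ⊆ E → (E \ C i).card ≤ p)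
    (hΔ : ∀ i ∈ I, HasDelta F (C i) s)
    (hs : ∀ i ∈ I, (A \ C i).card + (I.card - 1) * p < s) :
    ∃ φ : ι → Finset ℕ, (∀ i ∈ I, φ i ∈ F ∧ C i ⊆ φ i ∧ Disjoint (φ i \ C i) A) ∧
      (I : Set ι).PairwiseDisjoint fun i => φ i \ C i := by
  induction I using Finset.induction_on with
  | empty => exact ⟨fun _ => ∅, by simp, by simp⟩
  | insert a I ha ih =>
    rw [card_insert_of_notMem ha, Nat.add_sub_cancel] at hs
    obtain ⟨φ, hφ, hdisj⟩ := ih (fun i hi => hp i (mem_insert_of_mem hi))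
      (fun i hi => hΔ i (mem_insert_of_mem hi)) fun i hi =>
        lt_of_le_of_lt (by gcongr; omega) (hs i (mem_insert_of_mem hi))
    set B := (A \ C a) ∪ I.biUnion fun i => φ i \ C i
    have hB : B.card < s :=
      calc B.card ≤ (A \ C a).card + (I.biUnion fun i => φ i \ C i).card := card_union_le _ _
        _ ≤ (A \ C a).card + I.card * p := by
            gcongr
            exact card_biUnion_le_card_mul _ _ _ fun i hi =>
              hp i (mem_insert_of_mem hi) _ (hφ i hi).1 (hφ i hi).2.1
        _ < s := hs a (mem_insert_self a I)
    obtain ⟨E, hEF, hCE, hEB⟩ := (hΔ a (mem_insert_self a I)).exists_petal_disjoint hB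
    have hEA : Disjoint (E \ C a) A := by
      refine disjoint_left.2 fun x hx hxA => disjoint_left.1 hEB hx ?_
      exact mem_union_left _ (mem_sdiff.2 ⟨hxA, (mem_sdiff.1 hx).2⟩)
    have hEI : ∀ i ∈ I, Disjoint (E \ C a) (φ i \ C i) := fun i hi =>
      hEB.mono_right ((subset_biUnion_of_mem (fun i => φ i \ C i) hi).trans subset_union_right)
    have hupd : ∀ i ∈ I, Function.update φ a E i = φ i := fun i hi =>
      Function.update_of_ne (ne_of_mem_of_not_mem hi ha) _ _
    refine ⟨Function.update φ a E, ?_, ?_⟩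
    · intro i hi
      rcases mem_insert.1 hi with rfl | hi
      · simpa using ⟨hEF, hCE, hEA⟩
      · rw [hupd i hi]; exact hφ i hi
    · rw [coe_insert, Set.pairwiseDisjoint_insert_of_notMem (by simpa using ha)]
      refine ⟨fun i hi j hj hij => ?_, fun i hi => ?_⟩
      · simpa only [Function.onFun, hupd i hi, hupd j hj] using hdisj hi hj hij
      · simpa [hupd i hi] using hEI i hi

section Expansion

variable {W : Type*} [Fintype W] [DecidableEq W] {H : SimpleGraph W} [DecidableRel H.Adj]
  {k : ℕ}

lemma mem_sup_expansion {z : W ⊕ Sym2 W × Fin (k - 2)} (hz : z ∈ (expansion k H).sup id) :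
    (∃ e ∈ H.edgeFinset, ∃ v ∈ e, z = Sum.inl v) ∨
      ∃ e ∈ H.edgeFinset, ∃ i, z = Sum.inr (e, i) := by
  obtain ⟨_, hE, hzE⟩ := mem_sup.1 hz
  obtain ⟨e, he, rfl⟩ := mem_image.1 hE
  rcases mem_union.1 hzE with hz | hz
  · obtain ⟨v, hv, rfl⟩ := mem_image.1 hz
    exact Or.inl ⟨e, he, v, (mem_filter.1 hv).2, rfl⟩
  · obtain ⟨i, -, rfl⟩ := mem_image.1 hz
    exact Or.inr ⟨e, he, i, rfl⟩

lemma containsCopy_expansion_of_petals (F : Finset (Finset ℕ)) (g : W → ℕ)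
    (hg : Function.Injective g) (P : Sym2 W → Finset ℕ)
    (hPF : ∀ e ∈ H.edgeFinset, e.toFinset.image g ∪ P e ∈ F)
    (hPcard : ∀ e ∈ H.edgeFinset, (P e).card = k - 2)
    (hPA : ∀ e ∈ H.edgeFinset, Disjoint (P e) (H.edgeFinset.biUnion fun e => e.toFinset.image g))
    (hPP : (H.edgeFinset : Set (Sym2 W)).PairwiseDisjoint P) :
    ContainsCopy F (expansion k H) := by
  let newVertex (e : Sym2 W) (i : Fin (k - 2)) : ℕ :=
    if he : e ∈ H.edgeFinset then (P e).orderEmbOfFin (hPcard e he) i else 0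
  have newVertex_of_mem {e} (he : e ∈ H.edgeFinset) :
      newVertex e = (P e).orderEmbOfFin (hPcard e he) := by
    ext i; simp only [newVertex, dif_pos he]
  have newVertex_mem {e} (he : e ∈ H.edgeFinset) (i) : newVertex e i ∈ P e := by
    rw [newVertex_of_mem he]; exact orderEmbOfFin_mem _ _ i
  have g_not_mem {e e'} (he : e ∈ H.edgeFinset) (he' : e' ∈ H.edgeFinset) {v} (hv : v ∈ e') :
      g v ∉ P e :=
    disjoint_right.1 (hPA e he) (mem_biUnion.2 ⟨e', he', mem_image_of_mem g (by simpa using hv)⟩)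
  refine ⟨Sum.elim g fun p => newVertex p.1 p.2, ?_, ?_⟩
  · intro a ha b hb hab
    rcases mem_sup_expansion ha with ⟨e, he, v, hv, rfl⟩ | ⟨e, he, i, rfl⟩ <;>
      rcases mem_sup_expansion hb with ⟨e', he', w, hw, rfl⟩ | ⟨e', he', j, rfl⟩ <;>
      simp only [Sum.elim_inl, Sum.elim_inr] at hab
    · rw [hg hab]
    · exact absurd (hab ▸ newVertex_mem he' j) (g_not_mem he' he hv)
    · exact absurd (hab ▸ newVertex_mem he i) (g_not_mem he he' hw)
    · obtain rfl : e = e' := by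
        by_contra hne
        exact disjoint_left.1 (hPP he he' hne) (newVertex_mem he i) (hab ▸ newVertex_mem he' j)
      rw [newVertex_of_mem he] at hab
      rw [(P e).orderEmbOfFin (hPcard e he) |>.injective hab]
  · intro E hE
    obtain ⟨e, he, rfl⟩ := mem_image.1 hE
    have hverts : univ.filter (· ∈ e) = e.toFinset := by ext; simp
    rw [image_union, image_image, image_image, hverts]
    convert hPF e he using 2
    · rfl
    rw [← image_orderEmbOfFin_univ (P e) (hPcard e he), ← newVertex_of_mem he]
    rfl

end Expansion

/-- Kernel-graph lemma: if `H` has `q` edges and `H` is a subgraph of the kernel graph of a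
`k`-uniform family `F` with threshold `s = k·q` (i.e. each edge of `H` maps to a pair with a
Δ-system of size `k·q` in `F`), then `F` contains a copy of `H^(k)`. -/
theorem stmt_13 {W : Type*} [Fintype W] [DecidableEq W] (H : SimpleGraph W)
    [DecidableRel H.Adj] (q k : ℕ) (hk : 2 ≤ k) (hq : H.edgeFinset.card = q)
    (F : Finset (Finset ℕ)) (hF : ∀ E ∈ F, E.card = k)
    (g : W → ℕ) (hg : Function.Injective g)
    (hadj : ∀ x y : W, H.Adj x y → HasDelta F {g x, g y} (k * q)) :
    ContainsCopy F (expansion k H) := by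
  set C : Sym2 W → Finset ℕ := fun e => e.toFinset.image g
  have hC : ∀ e ∈ H.edgeFinset, (C e).card = 2 := fun e he => by
    rw [card_image_of_injective _ hg,
      Sym2.card_toFinset_of_not_isDiag _ (H.not_isDiag_of_mem_edgeSet (by simpa using he))]
  have hΔ : ∀ e ∈ H.edgeFinset, HasDelta F (C e) (k * q) := fun e he => by
    induction e with
    | _ x y => simpa [C, Sym2.toFinset_mk_eq] using hadj x y (by simpa using he)
  have hpetal : ∀ e ∈ H.edgeFinset, ∀ E ∈ F, C e ⊆ E → (E \ C e).card = k - 2 :=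
    fun e he E hE hCE => by rw [card_sdiff_of_subset hCE, hF E hE, hC e he]
  have hbound : ∀ e ∈ H.edgeFinset,
      (H.edgeFinset.biUnion C \ C e).card + (H.edgeFinset.card - 1) * (k - 2) < k * q := by
    intro e he
    have hold := card_biUnion_sdiff_le (fun e he => (hC e he).le) he
    have hq₁ : 1 ≤ q := hq ▸ card_pos.2 ⟨e, he⟩
    rw [hq] at hold ⊢
    obtain ⟨q', rfl⟩ : ∃ q', q = q' + 1 := ⟨q - 1, by omega⟩
    obtain ⟨k', rfl⟩ : ∃ k', k = k' + 2 := ⟨k - 2, by omega⟩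
    simp only [Nat.add_sub_cancel] at hold ⊢
    nlinarith
  obtain ⟨φ, hφ, hdisj⟩ := exists_pairwiseDisjoint_petals F C _ (k - 2) (k * q) H.edgeFinset
    (fun e he E hE hCE => (hpetal e he E hE hCE).le) hΔ hbound
  refine containsCopy_expansion_of_petals F g hg (fun e => φ e \ C e) (fun e he => ?_)
    (fun e he => hpetal e he _ (hφ e he).1 (hφ e he).2.1) (fun e he => (hφ e he).2.2) hdisj
  rw [union_sdiff_of_subset (hφ e he).2.1]
  exact (hφ e he).1
end
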